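/- Let A and Ã be two measurable complex-valued coefficients on (Ω∪Ω_δ)² with Re A(x,y) ≥ r_c > 0 and Re Ã(x,y) ≥ r_c > 0 and |A|, |Ã| bounded a.e. Let f be a linear functional on S_δ(Ω;ℂ) with |⟨f, v⟩| ≤ M |v|_{S_δ(Ω;ℂ)} for all v ∈ S_δ(Ω;ℂ). If u, ũ ∈ S_δ(Ω;ℂ) satisfy T_δ^A[u, v] = ⟨f, v⟩ and T_δ^Ã[ũ, v] = ⟨f, v⟩ for all v ∈ S_δ(Ω;ℂ), then |u − ũ|_{S_δ(Ω;ℂ)} ≤ ‖A − Ã‖_{L^∞((Ω∪Ω_δ)²)} · M / r_c² (stability estimate for complex coefficients). -/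

import Mathlib

/-!
Write `e = u - ũ`. Testing both equations with `e` and subtracting gives
`T^A[e, e] = T^{Ã - A}[ũ, e]`, so coercivity of `A` and Hölder's inequality yield
`r_c |e|² ≤ ‖A - Ã‖_∞ |ũ| |e|`, while testing the second equation with `ũ` gives `r_c |ũ| ≤ M`.
Everything takes place in `L²((Ω ∪ Ω_δ)²)`: for `w_v(x, y) = √γ_δ(|x - y|) (v y - v x)` one has
`|v|_{S_δ} = ‖w_v‖_{L²}` and `T^B[v, w] = ∫ B w_v conj(w_w)`, so the estimate is really one about
multiplication by bounded coefficients whose real part is at least `r_c`.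
-/

open MeasureTheory Metric Set Filter

noncomputable section

/-- Euclidean space ℝ^d. -/
abbrev Eu (d : ℕ) : Type := EuclideanSpace ℝ (Fin d)

/-- The nonlocal boundary collar Ω_δ = {x ∉ Ω : dist(x, ∂Ω) < δ}. -/
def NLcollar (d : ℕ) (Ω : Set (Eu d)) (δ : ℝ) : Set (Eu d) :=
  {x | x ∉ Ω ∧ Metric.infDist x (frontier Ω) < δ}

/-- The extended domain Ω ∪ Ω_δ. -/
def NLdom (d : ℕ) (Ω : Set (Eu d)) (δ : ℝ) : Set (Eu d) := Ω ∪ NLcollar d Ω δ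

/-- The rescaled kernel γ_δ(r) = δ^{-(d+2)} γ₁(r/δ). -/
def NLker (d : ℕ) (γ₁ : ℝ → ℝ) (δ r : ℝ) : ℝ := (δ ^ (d + 2))⁻¹ * γ₁ (r / δ)

/-- The squared nonlocal energy seminorm |u|²_{S_δ(Ω)}. -/
def NLenergySq (d : ℕ) (Ω : Set (Eu d)) (γ₁ : ℝ → ℝ) (δ : ℝ) (u : Eu d → ℝ) : ℝ :=
  ∫ x in NLdom d Ω δ, ∫ y in NLdom d Ω δ, NLker d γ₁ δ (dist y x) * (u y - u x) ^ 2

/-- Membership in the nonlocal energy space S_δ(Ω): u ∈ L²(Ω∪Ω_δ), finite nonlocal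
energy, and u = 0 a.e. on the collar Ω_δ. -/
def NLMemS (d : ℕ) (Ω : Set (Eu d)) (γ₁ : ℝ → ℝ) (δ : ℝ) (u : Eu d → ℝ) : Prop :=
  MemLp u 2 (volume.restrict (NLdom d Ω δ)) ∧
  IntegrableOn
    (fun p : Eu d × Eu d => NLker d γ₁ δ (dist p.2 p.1) * (u p.2 - u p.1) ^ 2)
    (NLdom d Ω δ ×ˢ NLdom d Ω δ) ∧
  ∀ᵐ x ∂(volume.restrict (NLcollar d Ω δ)), u x = 0

/-- The bilinear form T_δ with coefficient A. -/
def NLTform (d : ℕ) (Ω : Set (Eu d)) (γ₁ : ℝ → ℝ) (δ : ℝ)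
    (A : Eu d → Eu d → ℝ) (v w : Eu d → ℝ) : ℝ :=
  ∫ x in NLdom d Ω δ, ∫ y in NLdom d Ω δ,
    A x y * NLker d γ₁ δ (dist x y) * (v y - v x) * (w y - w x)

/-- The squared complex nonlocal energy seminorm |u|²_{S_δ(Ω;ℂ)}. -/
def NLenergySqC (d : ℕ) (Ω : Set (Eu d)) (γ₁ : ℝ → ℝ) (δ : ℝ) (u : Eu d → ℂ) : ℝ :=
  ∫ x in NLdom d Ω δ, ∫ y in NLdom d Ω δ, NLker d γ₁ δ (dist y x) * ‖u y - u x‖ ^ 2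

/-- Membership in the complex nonlocal energy space S_δ(Ω;ℂ). -/
def NLMemSC (d : ℕ) (Ω : Set (Eu d)) (γ₁ : ℝ → ℝ) (δ : ℝ) (u : Eu d → ℂ) : Prop :=
  MemLp u 2 (volume.restrict (NLdom d Ω δ)) ∧
  IntegrableOn
    (fun p : Eu d × Eu d => NLker d γ₁ δ (dist p.2 p.1) * ‖u p.2 - u p.1‖ ^ 2)
    (NLdom d Ω δ ×ˢ NLdom d Ω δ) ∧
  ∀ᵐ x ∂(volume.restrict (NLcollar d Ω δ)), u x = 0

/-- The sesquilinear form T_δ with complex coefficient B. -/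
def NLTformC (d : ℕ) (Ω : Set (Eu d)) (γ₁ : ℝ → ℝ) (δ : ℝ)
    (B : Eu d → Eu d → ℂ) (v w : Eu d → ℂ) : ℂ :=
  ∫ x in NLdom d Ω δ, ∫ y in NLdom d Ω δ,
    B x y * (NLker d γ₁ δ (dist x y) : ℂ) * (v y - v x) * (starRingEnd ℂ) (w y - w x)

lemma le_mul_div_sq_of_coercive {rc C M a b : ℝ} (hrc : 0 < rc) (hC : 0 ≤ C) (hM : 0 ≤ M)
    (ha : 0 ≤ a) (hb : 0 ≤ b) (hab : rc * a ^ 2 ≤ C * b * a) (hbM : rc * b ^ 2 ≤ M * b) :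
    a ≤ C * M / rc ^ 2 := by
  rw [le_div_iff₀ (by positivity)]
  have hrca : rc * a ≤ C * b := by
    rcases ha.eq_or_lt with rfl | ha
    · simpa using mul_nonneg hC hb
    · nlinarith
  have hCb : C * b * rc ≤ C * M := by
    rcases hb.eq_or_lt with rfl | hb
    · simpa using mul_nonneg hC hM
    · have hrcb : rc * b ≤ M := le_of_mul_le_mul_right (by nlinarith) hb
      nlinarith
  nlinarith

section MultiplicationForm

variable {X : Type*} [MeasurableSpace X] {μ : Measure X} {B f g : X → ℂ}

lemma sqrt_integral_norm_sq (hf : AEStronglyMeasurable f μ) :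
    √(∫ x, ‖f x‖ ^ 2 ∂μ) = lpNorm f 2 μ := by
  rw [lpNorm_eq_integral_norm_rpow_toReal two_ne_zero ENNReal.ofNat_ne_top hf,
    Real.sqrt_eq_rpow]
  norm_num

lemma integrable_mul_mul_conj (hB : MemLp B ⊤ μ) (hf : MemLp f 2 μ) (hg : MemLp g 2 μ) :
    Integrable (fun x => B x * f x * starRingEnd ℂ (g x)) μ :=
  memLp_one_iff_integrable.1 (hg.star.mul (hf.mul hB (r := 2)) (r := 1))

lemma norm_integral_mul_mul_conj_le (hB : MemLp B ⊤ μ) (hf : MemLp f 2 μ) (hg : MemLp g 2 μ) :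
    ‖∫ x, B x * f x * starRingEnd ℂ (g x) ∂μ‖ ≤
      lpNorm B ⊤ μ * lpNorm f 2 μ * lpNorm g 2 μ := by
  have hBf : eLpNorm (B * f) 2 μ ≤ eLpNorm B ⊤ μ * eLpNorm f 2 μ :=
    eLpNorm_smul_le_eLpNorm_top_mul_eLpNorm 2 hf.1 B
  have holder : eLpNorm (fun x => B x * f x * starRingEnd ℂ (g x)) 1 μ ≤
      eLpNorm (B * f) 2 μ * eLpNorm (star g) 2 μ := by
    simpa using eLpNorm_le_eLpNorm_mul_eLpNorm'_of_norm (p := 2) (q := 2) (r := 1)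
      (hf.mul hB (r := 2)).1 hg.star.1 (· * ·) 1 (.of_forall fun x => by simp)
  calc ‖∫ x, B x * f x * starRingEnd ℂ (g x) ∂μ‖
      ≤ ∫ x, ‖B x * f x * starRingEnd ℂ (g x)‖ ∂μ := norm_integral_le_integral_norm _
    _ = lpNorm (fun x => B x * f x * starRingEnd ℂ (g x)) 1 μ :=
      (lpNorm_one_eq_integral_norm (integrable_mul_mul_conj hB hf hg).1).symm
    _ ≤ lpNorm B ⊤ μ * lpNorm f 2 μ * lpNorm g 2 μ := by
      rw [← toReal_eLpNorm (integrable_mul_mul_conj hB hf hg).1, ← toReal_eLpNorm hB.1,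
        ← toReal_eLpNorm hf.1, ← toReal_eLpNorm hg.1, ← ENNReal.toReal_mul, ← ENNReal.toReal_mul,
        ← eLpNorm_star (f := g)]
      refine ENNReal.toReal_mono ?_ (holder.trans (mul_le_mul_left hBf _))
      rw [eLpNorm_star]
      exact ENNReal.mul_ne_top (ENNReal.mul_ne_top hB.2.ne hf.2.ne) hg.2.ne

lemma mul_lpNorm_sq_le_re_integral_mul_mul_conj {rc : ℝ} (hB : MemLp B ⊤ μ)
    (hre : ∀ᵐ x ∂μ, rc ≤ (B x).re) (hf : MemLp f 2 μ) :
    rc * lpNorm f 2 μ ^ 2 ≤ (∫ x, B x * f x * starRingEnd ℂ (f x) ∂μ).re := by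
  have hpt : ∀ x, (B x * f x * starRingEnd ℂ (f x)).re = (B x).re * ‖f x‖ ^ 2 := fun x => by
    rw [mul_assoc, Complex.mul_conj, Complex.normSq_eq_norm_sq, Complex.re_mul_ofReal]
  have hsq : Integrable (fun x => ‖f x‖ ^ 2) μ := (memLp_two_iff_integrable_sq_norm hf.1).1 hf
  rw [← sqrt_integral_norm_sq hf.1, Real.sq_sqrt (integral_nonneg fun _ => by positivity),
    ← integral_const_mul, ← RCLike.re_to_complex, ← integral_re (integrable_mul_mul_conj hB hf hf)]
  refine integral_mono_ae (hsq.const_mul rc) (integrable_mul_mul_conj hB hf hf).re ?_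
  filter_upwards [hre] with x hx
  simp only [RCLike.re_to_complex, hpt]
  exact mul_le_mul_of_nonneg_right hx (by positivity)

theorem lpNorm_sub_le_of_coercive {B B' f f' : X → ℂ} {rc M : ℝ} (hrc : 0 < rc) (hM : 0 ≤ M)
    (hB : MemLp B ⊤ μ) (hB' : MemLp B' ⊤ μ)
    (hre : ∀ᵐ x ∂μ, rc ≤ (B x).re) (hre' : ∀ᵐ x ∂μ, rc ≤ (B' x).re)
    (hf : MemLp f 2 μ) (hf' : MemLp f' 2 μ)
    (heq : ∫ x, B x * f x * starRingEnd ℂ (f x - f' x) ∂μ =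
      ∫ x, B' x * f' x * starRingEnd ℂ (f x - f' x) ∂μ)
    (hbd : ‖∫ x, B' x * f' x * starRingEnd ℂ (f' x) ∂μ‖ ≤ M * lpNorm f' 2 μ) :
    lpNorm (f - f') 2 μ ≤ lpNorm (B - B') ⊤ μ * M / rc ^ 2 := by
  have he : MemLp (f - f') 2 μ := hf.sub hf'
  have hdiff : MemLp (B' - B) ⊤ μ := hB'.sub hB
  have herr : ∫ x, B x * (f - f') x * starRingEnd ℂ ((f - f') x) ∂μ =
      ∫ x, (B' - B) x * f' x * starRingEnd ℂ ((f - f') x) ∂μ := by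
    have h1 := integral_sub (integrable_mul_mul_conj hB hf he) (integrable_mul_mul_conj hB hf' he)
    have h2 := integral_sub (integrable_mul_mul_conj hB' hf' he)
      (integrable_mul_mul_conj hB hf' he)
    simp only [Pi.sub_apply] at h1 h2 ⊢
    rw [show (fun x => B x * (f x - f' x) * starRingEnd ℂ (f x - f' x)) =
        fun x => B x * f x * starRingEnd ℂ (f x - f' x) -
          B x * f' x * starRingEnd ℂ (f x - f' x) by ext; ring, h1, heq, ← h2]
    congr 1; ext; ring
  refine le_mul_div_sq_of_coercive (b := lpNorm f' 2 μ) hrc lpNorm_nonneg hM lpNorm_nonneg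
    lpNorm_nonneg ?_ ?_
  · calc rc * lpNorm (f - f') 2 μ ^ 2
        ≤ (∫ x, B x * (f - f') x * starRingEnd ℂ ((f - f') x) ∂μ).re :=
          mul_lpNorm_sq_le_re_integral_mul_mul_conj hB hre he
      _ ≤ ‖∫ x, (B' - B) x * f' x * starRingEnd ℂ ((f - f') x) ∂μ‖ :=
          herr ▸ Complex.re_le_norm _
      _ ≤ lpNorm (B - B') ⊤ μ * lpNorm f' 2 μ * lpNorm (f - f') 2 μ := by
          rw [lpNorm_sub_comm B B']
          exact norm_integral_mul_mul_conj_le hdiff hf' he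
  · calc rc * lpNorm f' 2 μ ^ 2
        ≤ (∫ x, B' x * f' x * starRingEnd ℂ (f' x) ∂μ).re :=
          mul_lpNorm_sq_le_re_integral_mul_mul_conj hB' hre' hf'
      _ ≤ M * lpNorm f' 2 μ := (Complex.re_le_norm _).trans hbd

end MultiplicationForm

lemma MeasureTheory.Measure.volume_restrict_prod_restrict {α β : Type*}
    [MeasureSpace α] [MeasureSpace β]
    [SFinite (volume : Measure α)] [SFinite (volume : Measure β)] (s : Set α) (t : Set β) :
    (volume.restrict s).prod (volume.restrict t) = volume.restrict (s ×ˢ t) := by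
  rw [Measure.prod_restrict, ← Measure.volume_eq_prod]

section Nonlocal

variable {d : ℕ} {Ω : Set (Eu d)} {γ₁ : ℝ → ℝ} {δ : ℝ}

lemma NLker_nonneg (hγ0 : ∀ r, 0 ≤ γ₁ r) (hδ : 0 ≤ δ) (r : ℝ) : 0 ≤ NLker d γ₁ δ r :=
  mul_nonneg (by positivity) (hγ0 _)

lemma measurable_NLker_dist (hγmono : AntitoneOn γ₁ (Ici 0)) (hδ : 0 ≤ δ) :
    Measurable fun p : Eu d × Eu d => NLker d γ₁ δ (dist p.1 p.2) := by
  -- clamping at `0` makes `γ₁` antitone, hence measurable, on all of `ℝ`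
  have hanti : Antitone fun r : ℝ => γ₁ (max r 0) := fun r s hrs =>
    hγmono (mem_Ici.2 (le_max_right _ _)) (mem_Ici.2 (le_max_right _ _)) (max_le_max hrs le_rfl)
  have heq : (fun p : Eu d × Eu d => NLker d γ₁ δ (dist p.1 p.2)) =
      fun p => (δ ^ (d + 2))⁻¹ * γ₁ (max (dist p.1 p.2 / δ) 0) := by
    ext p
    rw [NLker, max_eq_left (by positivity)]
  rw [heq]
  exact (hanti.measurable.comp (continuous_dist.measurable.div_const δ)).const_mul _

variable (d γ₁ δ) in
def NLweightedDiff (v : Eu d → ℂ) (p : Eu d × Eu d) : ℂ :=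
  (√(NLker d γ₁ δ (dist p.1 p.2)) : ℂ) * (v p.2 - v p.1)

lemma NLweightedDiff_sub (u u' : Eu d → ℂ) :
    NLweightedDiff d γ₁ δ (fun x => u x - u' x) =
      NLweightedDiff d γ₁ δ u - NLweightedDiff d γ₁ δ u' := by
  ext p
  simp only [NLweightedDiff, Pi.sub_apply]
  ring

lemma norm_NLweightedDiff_sq (hγ0 : ∀ r, 0 ≤ γ₁ r) (hδ : 0 ≤ δ) (v : Eu d → ℂ)
    (p : Eu d × Eu d) :
    ‖NLweightedDiff d γ₁ δ v p‖ ^ 2 = NLker d γ₁ δ (dist p.2 p.1) * ‖v p.2 - v p.1‖ ^ 2 := by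
  rw [NLweightedDiff, norm_mul, mul_pow, Complex.norm_real, Real.norm_eq_abs, sq_abs,
    Real.sq_sqrt (NLker_nonneg hγ0 hδ _), dist_comm]

lemma mul_NLweightedDiff_mul_conj (hγ0 : ∀ r, 0 ≤ γ₁ r) (hδ : 0 ≤ δ) (b : ℂ)
    (v w : Eu d → ℂ) (p : Eu d × Eu d) :
    b * NLweightedDiff d γ₁ δ v p * starRingEnd ℂ (NLweightedDiff d γ₁ δ w p) =
      b * (NLker d γ₁ δ (dist p.1 p.2) : ℂ) * (v p.2 - v p.1) * starRingEnd ℂ (w p.2 - w p.1) := by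
  have hκ : (√(NLker d γ₁ δ (dist p.1 p.2)) : ℂ) * √(NLker d γ₁ δ (dist p.1 p.2)) =
      NLker d γ₁ δ (dist p.1 p.2) := by
    rw [← Complex.ofReal_mul, Real.mul_self_sqrt (NLker_nonneg hγ0 hδ _)]
  rw [NLweightedDiff, NLweightedDiff, map_mul, Complex.conj_ofReal, ← hκ]
  ring

lemma NLMemSC.memLp_NLweightedDiff (hγ0 : ∀ r, 0 ≤ γ₁ r) (hγmono : AntitoneOn γ₁ (Ici 0))
    (hδ : 0 ≤ δ) {v : Eu d → ℂ} (hv : NLMemSC d Ω γ₁ δ v) :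
    MemLp (NLweightedDiff d γ₁ δ v) 2 (volume.restrict (NLdom d Ω δ ×ˢ NLdom d Ω δ)) := by
  have hmeas : AEStronglyMeasurable (NLweightedDiff d γ₁ δ v)
      ((volume.restrict (NLdom d Ω δ)).prod (volume.restrict (NLdom d Ω δ))) :=
    (Complex.measurable_ofReal.comp (measurable_NLker_dist hγmono hδ).sqrt).aestronglyMeasurable.mul
      (hv.1.aestronglyMeasurable.comp_snd.sub hv.1.aestronglyMeasurable.comp_fst)
  rw [Measure.volume_restrict_prod_restrict] at hmeas
  refine (memLp_two_iff_integrable_sq_norm hmeas).2 ?_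
  simp only [norm_NLweightedDiff_sq hγ0 hδ]
  exact hv.2.1

lemma NLMemSC.sub (hγ0 : ∀ r, 0 ≤ γ₁ r) (hγmono : AntitoneOn γ₁ (Ici 0)) (hδ : 0 ≤ δ)
    {u u' : Eu d → ℂ} (hu : NLMemSC d Ω γ₁ δ u) (hu' : NLMemSC d Ω γ₁ δ u') :
    NLMemSC d Ω γ₁ δ (fun x => u x - u' x) := by
  refine ⟨hu.1.sub hu'.1, ?_, ?_⟩
  · have hW := (hu.memLp_NLweightedDiff hγ0 hγmono hδ).sub (hu'.memLp_NLweightedDiff hγ0 hγmono hδ)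
    rw [← NLweightedDiff_sub] at hW
    have hint := hW.integrable_norm_pow two_ne_zero
    simp only [norm_NLweightedDiff_sq hγ0 hδ] at hint
    exact hint
  · filter_upwards [hu.2.2, hu'.2.2] with x hx hx'
    rw [hx, hx', sub_zero]

lemma NLMemSC.sqrt_NLenergySqC (hγ0 : ∀ r, 0 ≤ γ₁ r) (hγmono : AntitoneOn γ₁ (Ici 0))
    (hδ : 0 ≤ δ) {v : Eu d → ℂ} (hv : NLMemSC d Ω γ₁ δ v) :
    √(NLenergySqC d Ω γ₁ δ v) =
      lpNorm (NLweightedDiff d γ₁ δ v) 2 (volume.restrict (NLdom d Ω δ ×ˢ NLdom d Ω δ)) := by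
  have hint := hv.2.1
  rw [IntegrableOn, ← Measure.volume_restrict_prod_restrict] at hint
  rw [NLenergySqC, integral_integral hint, Measure.volume_restrict_prod_restrict,
    ← sqrt_integral_norm_sq (hv.memLp_NLweightedDiff hγ0 hγmono hδ).1]
  simp only [norm_NLweightedDiff_sq hγ0 hδ]

lemma NLMemSC.NLTformC_eq (hγ0 : ∀ r, 0 ≤ γ₁ r) (hγmono : AntitoneOn γ₁ (Ici 0))
    (hδ : 0 ≤ δ) {B : Eu d → Eu d → ℂ}
    (hB : MemLp (fun p : Eu d × Eu d => B p.1 p.2) ⊤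
      (volume.restrict (NLdom d Ω δ ×ˢ NLdom d Ω δ)))
    {v w : Eu d → ℂ} (hv : NLMemSC d Ω γ₁ δ v) (hw : NLMemSC d Ω γ₁ δ w) :
    NLTformC d Ω γ₁ δ B v w =
      ∫ p, B p.1 p.2 * NLweightedDiff d γ₁ δ v p * starRingEnd ℂ (NLweightedDiff d γ₁ δ w p)
        ∂(volume.restrict (NLdom d Ω δ ×ˢ NLdom d Ω δ)) := by
  have hint := integrable_mul_mul_conj hB (hv.memLp_NLweightedDiff hγ0 hγmono hδ)
    (hw.memLp_NLweightedDiff hγ0 hγmono hδ)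
  simp only [mul_NLweightedDiff_mul_conj hγ0 hδ] at hint ⊢
  rw [← Measure.volume_restrict_prod_restrict] at hint ⊢
  exact integral_integral hint

end Nonlocal

theorem nonlocal_stability_complex_general
    (d : ℕ) (Ω : Set (Eu d))
    (γ₁ : ℝ → ℝ) (hγ0 : ∀ r, 0 ≤ γ₁ r) (hγmono : AntitoneOn γ₁ (Ici 0))
    (δ : ℝ) (hδ : 0 < δ)
    (A A' : Eu d → Eu d → ℂ)
    (hAmeas : Measurable fun p : Eu d × Eu d => A p.1 p.2)
    (hA'meas : Measurable fun p : Eu d × Eu d => A' p.1 p.2)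
    (rc : ℝ) (hrc : 0 < rc)
    (hre : ∀ᵐ p ∂(volume.restrict (NLdom d Ω δ ×ˢ NLdom d Ω δ)),
      rc ≤ (A p.1 p.2).re ∧ rc ≤ (A' p.1 p.2).re)
    (hbdd : ∃ Rc : ℝ, ∀ᵐ p ∂(volume.restrict (NLdom d Ω δ ×ˢ NLdom d Ω δ)),
      ‖A p.1 p.2‖ ≤ Rc ∧ ‖A' p.1 p.2‖ ≤ Rc)
    (F : (Eu d → ℂ) → ℂ)
    (M : ℝ) (hM0 : 0 ≤ M)
    (hFbd : ∀ v : Eu d → ℂ, NLMemSC d Ω γ₁ δ v →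
      ‖F v‖ ≤ M * Real.sqrt (NLenergySqC d Ω γ₁ δ v))
    (u u' : Eu d → ℂ) (huS : NLMemSC d Ω γ₁ δ u) (hu'S : NLMemSC d Ω γ₁ δ u')
    (hsol : ∀ v : Eu d → ℂ, NLMemSC d Ω γ₁ δ v → NLTformC d Ω γ₁ δ A u v = F v)
    (hsol' : ∀ v : Eu d → ℂ, NLMemSC d Ω γ₁ δ v → NLTformC d Ω γ₁ δ A' u' v = F v) :
    Real.sqrt (NLenergySqC d Ω γ₁ δ (fun x => u x - u' x)) ≤
      (eLpNorm (fun p : Eu d × Eu d => A p.1 p.2 - A' p.1 p.2) ⊤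
        (volume.restrict (NLdom d Ω δ ×ˢ NLdom d Ω δ))).toReal * M / rc ^ 2 := by
  obtain ⟨Rc, hRc⟩ := hbdd
  have hA : MemLp (fun p : Eu d × Eu d => A p.1 p.2) ⊤
      (volume.restrict (NLdom d Ω δ ×ˢ NLdom d Ω δ)) :=
    memLp_top_of_bound hAmeas.aestronglyMeasurable Rc (hRc.mono fun _ h => h.1)
  have hA' : MemLp (fun p : Eu d × Eu d => A' p.1 p.2) ⊤
      (volume.restrict (NLdom d Ω δ ×ˢ NLdom d Ω δ)) :=
    memLp_top_of_bound hA'meas.aestronglyMeasurable Rc (hRc.mono fun _ h => h.2)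
  have he := huS.sub hγ0 hγmono hδ.le hu'S
  rw [he.sqrt_NLenergySqC hγ0 hγmono hδ.le, NLweightedDiff_sub,
    toReal_eLpNorm (f := fun p : Eu d × Eu d => A p.1 p.2 - A' p.1 p.2)
      (hAmeas.sub hA'meas).aestronglyMeasurable]
  refine lpNorm_sub_le_of_coercive hrc hM0 hA hA' (hre.mono fun _ h => h.1)
    (hre.mono fun _ h => h.2) (huS.memLp_NLweightedDiff hγ0 hγmono hδ.le)
    (hu'S.memLp_NLweightedDiff hγ0 hγmono hδ.le) ?_ ?_
  · simpa only [huS.NLTformC_eq hγ0 hγmono hδ.le hA he, hu'S.NLTformC_eq hγ0 hγmono hδ.le hA' he,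
      NLweightedDiff_sub, Pi.sub_apply] using (hsol _ he).trans (hsol' _ he).symm
  · rw [← hu'S.NLTformC_eq hγ0 hγmono hδ.le hA' hu'S, hsol' u' hu'S,
      ← hu'S.sqrt_NLenergySqC hγ0 hγmono hδ.le]
    exact hFbd u' hu'S

/-- Stability estimate for complex coefficients: if u and ũ solve the complex nonlocal
problems with coefficients A and Ã whose real parts are bounded below by r_c > 0 and
which are bounded a.e., against the same bounded linear functional f, then
|u − ũ|_{S_δ(Ω;ℂ)} ≤ ‖A − Ã‖_{L^∞} M / r_c². -/
theorem nonlocal_stability_complex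
    (d : ℕ) (hd : 1 ≤ d) (Ω : Set (Eu d))
    (hΩopen : IsOpen Ω) (hΩbdd : Bornology.IsBounded Ω) (hΩne : Ω.Nonempty)
    (γ₁ : ℝ → ℝ) (hγ0 : ∀ r, 0 ≤ γ₁ r) (hγmono : AntitoneOn γ₁ (Ici 0))
    (hγsupp : ∀ r, 1 < r → γ₁ r = 0)
    (hγnorm : (∫ z in ball (0 : Eu d) 1, γ₁ ‖z‖ * ‖z‖ ^ 2) = (d : ℝ))
    (δ : ℝ) (hδ : 0 < δ)
    (A A' : Eu d → Eu d → ℂ)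
    (hAmeas : Measurable fun p : Eu d × Eu d => A p.1 p.2)
    (hA'meas : Measurable fun p : Eu d × Eu d => A' p.1 p.2)
    (rc : ℝ) (hrc : 0 < rc)
    (hre : ∀ᵐ p ∂(volume.restrict (NLdom d Ω δ ×ˢ NLdom d Ω δ)),
      rc ≤ (A p.1 p.2).re ∧ rc ≤ (A' p.1 p.2).re)
    (hbdd : ∃ Rc : ℝ, ∀ᵐ p ∂(volume.restrict (NLdom d Ω δ ×ˢ NLdom d Ω δ)),
      ‖A p.1 p.2‖ ≤ Rc ∧ ‖A' p.1 p.2‖ ≤ Rc)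
    (F : (Eu d → ℂ) → ℂ)
    (hFadd : ∀ v w : Eu d → ℂ, F (v + w) = F v + F w)
    (hFsmul : ∀ (c : ℂ) (v : Eu d → ℂ), F (c • v) = c * F v)
    (M : ℝ) (hM0 : 0 ≤ M)
    (hFbd : ∀ v : Eu d → ℂ, NLMemSC d Ω γ₁ δ v →
      ‖F v‖ ≤ M * Real.sqrt (NLenergySqC d Ω γ₁ δ v))
    (u u' : Eu d → ℂ) (huS : NLMemSC d Ω γ₁ δ u) (hu'S : NLMemSC d Ω γ₁ δ u')
    (hsol : ∀ v : Eu d → ℂ, NLMemSC d Ω γ₁ δ v → NLTformC d Ω γ₁ δ A u v = F v)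
    (hsol' : ∀ v : Eu d → ℂ, NLMemSC d Ω γ₁ δ v → NLTformC d Ω γ₁ δ A' u' v = F v) :
    Real.sqrt (NLenergySqC d Ω γ₁ δ (fun x => u x - u' x)) ≤
      (eLpNorm (fun p : Eu d × Eu d => A p.1 p.2 - A' p.1 p.2) ⊤
        (volume.restrict (NLdom d Ω δ ×ˢ NLdom d Ω δ))).toReal * M / rc ^ 2 :=
  nonlocal_stability_complex_general d Ω γ₁ hγ0 hγmono δ hδ A A' hAmeas hA'meas rc hrc hre hbdd F M
    hM0 hFbd u u' huS hu'S hsol hsol'
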